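/- Left null vectors of Y_bottom are collinear with a fixed direction: Assume ω_k > 0 and S_k ≠ 0 (equivalently g_{kk} ≠ 0) for every k = 1,…,m_ue. Then every d ∈ ℂ^{m_ue} satisfying d^T Y_bottom = 0 (transpose without conjugation) is a scalar multiple of the entrywise product (H^* e_1) ∘ v of the vector H^* e_1 ∈ ℂ^{m_ue} with the vector v. -/

import Mathlib

open Matrix Finset

noncomputable def Gmat {mtx mue : ℕ} (H P : Matrix (Fin mtx) (Fin mue) ℂ) :
    Matrix (Fin mue) (Fin mue) ℂ := Hᴴ * P

noncomputable def Sval {mtx mue : ℕ} (H P : Matrix (Fin mtx) (Fin mue) ℂ) (k : Fin mue) : ℝ :=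
  ‖Gmat H P k k‖ ^ 2

noncomputable def Ival {mtx mue : ℕ} (H P : Matrix (Fin mtx) (Fin mue) ℂ) (k : Fin mue) : ℝ :=
  ∑ j ∈ Finset.univ.erase k, ‖Gmat H P k j‖ ^ 2

noncomputable def Wval {mtx mue : ℕ} (H P : Matrix (Fin mtx) (Fin mue) ℂ)
    (ω : Fin mue → ℝ) (k : Fin mue) : ℝ := Ival H P k + ω k ^ 2

noncomputable def Lval {mtx mue : ℕ} (H P : Matrix (Fin mtx) (Fin mue) ℂ) (k : Fin mue) : ℝ :=
  ∑ j ∈ Finset.univ.erase k, ‖Gmat H P j k‖ ^ 2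

noncomputable def SINR {mtx mue : ℕ} (H P : Matrix (Fin mtx) (Fin mue) ℂ)
    (ω : Fin mue → ℝ) (k : Fin mue) : ℝ := Sval H P k / Wval H P ω k

def PowerOK {mtx mue : ℕ} (β : Fin mtx → ℝ) (P : Matrix (Fin mtx) (Fin mue) ℂ) : Prop :=
  ∀ i, ∑ j, ‖P i j‖ ^ 2 ≤ β i

def ParetoOptimal {mtx mue : ℕ} (H : Matrix (Fin mtx) (Fin mue) ℂ) (ω : Fin mue → ℝ)
    (β : Fin mtx → ℝ) (P : Matrix (Fin mtx) (Fin mue) ℂ) : Prop :=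
  PowerOK β P ∧ ¬ ∃ Q : Matrix (Fin mtx) (Fin mue) ℂ, PowerOK β Q ∧
    (∀ k, SINR H P ω k ≤ SINR H Q ω k) ∧ (∃ k, SINR H P ω k < SINR H Q ω k)

/-- The matrix `F` with `F_{kk} = 1` and `F_{kj} = -S_k/W_k` for `j ≠ k`. -/
noncomputable def Fmat {mtx mue : ℕ} (H P : Matrix (Fin mtx) (Fin mue) ℂ) (ω : Fin mue → ℝ) :
    Matrix (Fin mue) (Fin mue) ℂ :=
  Matrix.of fun k j => if k = j then 1 else ((-(Sval H P k / Wval H P ω k) : ℝ) : ℂ)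

/-- `D := 4 · diag(1/W_1,…,1/W_{m_ue}) · (G ∘ F)`. -/
noncomputable def Dmat {mtx mue : ℕ} (H P : Matrix (Fin mtx) (Fin mue) ℂ) (ω : Fin mue → ℝ) :
    Matrix (Fin mue) (Fin mue) ℂ :=
  (4 : ℂ) • (Matrix.diagonal fun k => (((Wval H P ω k)⁻¹ : ℝ) : ℂ)) *
    Matrix.hadamard (Gmat H P) (Fmat H P ω)

/-- `Y_bottom := [Dᵀ | Pᵀe_2 | ⋯ | Pᵀe_{m_tx}]`: its first `m_ue` columns are the columns
of `Dᵀ` and the remaining `m_tx - 1` columns are the transposed rows `2,…,m_tx` of `P`. -/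
noncomputable def Ybottom {mtx mue : ℕ} [NeZero mtx]
    (H P : Matrix (Fin mtx) (Fin mue) ℂ) (ω : Fin mue → ℝ) :
    Matrix (Fin mue) (Fin mue ⊕ {i : Fin mtx // i ≠ 0}) ℂ :=
  Matrix.of fun k c => Sum.elim (fun j => Dmat H P ω j k) (fun i => P i.1 k) c

/-- The direction vector `v` with `v_k = 1/((1 + W_k/S_k)·g_{kk})`. -/
noncomputable def vvec {mtx mue : ℕ} (H P : Matrix (Fin mtx) (Fin mue) ℂ) (ω : Fin mue → ℝ) :
    Fin mue → ℂ := fun k =>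
  (((1 + Wval H P ω k / Sval H P k : ℝ) : ℂ) * Gmat H P k k)⁻¹

/-- **Left null vectors of `Y_bottom` are collinear with a fixed direction:** every `d` with
`dᵀ Y_bottom = 0` (transpose without conjugation) is a scalar multiple of the entrywise
product `(H^* e_1) ∘ v`. -/
theorem left_null_vector_collinear {mtx mue : ℕ} [NeZero mtx] (hmtx : 2 ≤ mtx)
    (H P : Matrix (Fin mtx) (Fin mue) ℂ) (ω : Fin mue → ℝ)
    (hω : ∀ k, 0 < ω k) (hg : ∀ k, Gmat H P k k ≠ 0)
    (d : Fin mue → ℂ) (hd : Matrix.vecMul d (Ybottom H P ω) = 0) :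
    ∃ c : ℂ, d = c • fun k => (starRingEnd ℂ) (H 0 k) * vvec H P ω k := by
  classical
  set c : ℂ := ∑ k, P 0 k * d k with hc
  refine ⟨c, ?_⟩
  funext j
  -- positivity facts
  have hW : ∀ k, 0 < Wval H P ω k := by
    intro k
    have h1 : 0 ≤ Ival H P k :=
      Finset.sum_nonneg fun j _ => by positivity
    have h2 : 0 < ω k ^ 2 := pow_pos (hω k) 2
    unfold Wval; linarith
  have hS : ∀ k, 0 < Sval H P k := by
    intro k
    have := hg k
    have habs : ‖Gmat H P k k‖ ≠ 0 := by simpa using this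
    unfold Sval
    exact pow_pos ((norm_nonneg _).lt_of_ne (Ne.symm habs)) 2
  -- the P-columns conditions
  have hP : ∀ i : Fin mtx, i ≠ 0 → ∑ k, P i k * d k = 0 := by
    intro i hi
    have h := congrFun hd (Sum.inr ⟨i, hi⟩)
    simp only [Matrix.vecMul, dotProduct, Ybottom, Matrix.of_apply, Sum.elim_inr,
      Pi.zero_apply] at h
    rw [← h]
    exact Finset.sum_congr rfl fun k _ => mul_comm _ _
  -- key sum identity
  have hG : ∀ j, ∑ k, Gmat H P j k * d k = (starRingEnd ℂ) (H 0 j) * c := by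
    intro j
    calc ∑ k, Gmat H P j k * d k
        = ∑ k, ∑ i, (starRingEnd ℂ) (H i j) * P i k * d k := by
          refine Finset.sum_congr rfl fun k _ => ?_
          simp [Gmat, Matrix.mul_apply, Matrix.conjTranspose_apply, Finset.sum_mul]
      _ = ∑ i, (starRingEnd ℂ) (H i j) * ∑ k, P i k * d k := by
          rw [Finset.sum_comm]
          refine Finset.sum_congr rfl fun i _ => ?_
          rw [Finset.mul_sum]
          refine Finset.sum_congr rfl fun k _ => by ring
      _ = (starRingEnd ℂ) (H 0 j) * c := by
          rw [← Finset.add_sum_erase _ _ (Finset.mem_univ (0 : Fin mtx))]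
          rw [hc]
          have : ∑ i ∈ Finset.univ.erase (0 : Fin mtx),
              (starRingEnd ℂ) (H i j) * ∑ k, P i k * d k = 0 := by
            refine Finset.sum_eq_zero fun i hi => ?_
            rw [hP i (Finset.ne_of_mem_erase hi), mul_zero]
          rw [this, add_zero]
  -- the D-column condition for index j
  have hD : ∑ k, d k * Dmat H P ω j k = 0 := by
    have h := congrFun hd (Sum.inl j)
    simpa [Matrix.vecMul, dotProduct, Ybottom] using h
  have hDentry : ∀ k, Dmat H P ω j k
      = 4 * (((Wval H P ω j)⁻¹ : ℝ) : ℂ) * (Gmat H P j k * Fmat H P ω j k) := by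
    intro k
    simp only [Dmat, Matrix.smul_mul, Matrix.smul_apply, Matrix.diagonal_mul,
      Matrix.hadamard_apply, smul_eq_mul]
    ring
  -- reduce hD
  have hW4 : (4 : ℂ) * (((Wval H P ω j)⁻¹ : ℝ) : ℂ) ≠ 0 := by
    have := (hW j).ne'
    simp [Complex.ofReal_eq_zero]
    exact this
  have hD2 : ∑ k, d k * (Gmat H P j k * Fmat H P ω j k) = 0 := by
    have : (4 * (((Wval H P ω j)⁻¹ : ℝ) : ℂ)) *
        ∑ k, d k * (Gmat H P j k * Fmat H P ω j k) = 0 := by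
      rw [Finset.mul_sum, ← hD]
      refine Finset.sum_congr rfl fun k _ => ?_
      rw [hDentry k]; ring
    exact (mul_eq_zero.mp this).resolve_left hW4
  -- split the sum at k = j
  set r : ℝ := Sval H P j / Wval H P ω j with hr
  have hrpos : 0 < r := div_pos (hS j) (hW j)
  have hFdiag : Fmat H P ω j j = 1 := by simp [Fmat]
  have hFoff : ∀ k, k ≠ j → Fmat H P ω j k = ((-r : ℝ) : ℂ) := by
    intro k hk
    simp [Fmat, (Ne.symm hk : ¬ j = k), hr]
  have hsplit : d j * Gmat H P j j
      + ((-r : ℝ) : ℂ) * ((starRingEnd ℂ) (H 0 j) * c - d j * Gmat H P j j) = 0 := by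
    have h1 : ∑ k ∈ Finset.univ.erase j, d k * Gmat H P j k
        = (starRingEnd ℂ) (H 0 j) * c - d j * Gmat H P j j := by
      have := hG j
      rw [← Finset.add_sum_erase _ (fun k => Gmat H P j k * d k) (Finset.mem_univ j)] at this
      have h2 : ∑ k ∈ Finset.univ.erase j, Gmat H P j k * d k
          = ∑ k ∈ Finset.univ.erase j, d k * Gmat H P j k :=
        Finset.sum_congr rfl fun k _ => mul_comm _ _
      rw [h2] at this
      linear_combination this
    have h3 : ∑ k, d k * (Gmat H P j k * Fmat H P ω j k)
        = d j * Gmat H P j j + ((-r : ℝ) : ℂ) * ∑ k ∈ Finset.univ.erase j, d k * Gmat H P j k := by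
      rw [← Finset.add_sum_erase _ _ (Finset.mem_univ j), hFdiag, Finset.mul_sum]
      congr 1
      · ring
      · refine Finset.sum_congr rfl fun k hk => ?_
        rw [hFoff k (Finset.ne_of_mem_erase hk)]; ring
    rw [h3, h1] at hD2
    exact hD2
  -- solve for d j
  have hrC : ((r : ℝ) : ℂ) ≠ 0 := by
    simp [Complex.ofReal_eq_zero]; exact hrpos.ne'
  have hkey : d j * (((1 + Wval H P ω j / Sval H P j : ℝ) : ℂ) * Gmat H P j j)
      = (starRingEnd ℂ) (H 0 j) * c := by
    have hreal : (1 + Wval H P ω j / Sval H P j : ℝ) * r = 1 + r := by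
      rw [hr]
      field_simp [(hS j).ne', (hW j).ne']
      ring
    have hrealC : ((1 + Wval H P ω j / Sval H P j : ℝ) : ℂ) * ((r : ℝ) : ℂ)
        = 1 + ((r : ℝ) : ℂ) := by
      rw [← Complex.ofReal_mul, hreal]; push_cast; ring
    have h4 : d j * Gmat H P j j * (1 + ((r : ℝ) : ℂ))
        = ((r : ℝ) : ℂ) * ((starRingEnd ℂ) (H 0 j) * c) := by
      have := hsplit
      push_cast at this ⊢
      linear_combination this
    have h5 : d j * (((1 + Wval H P ω j / Sval H P j : ℝ) : ℂ) * Gmat H P j j) * ((r : ℝ) : ℂ)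
        = (starRingEnd ℂ) (H 0 j) * c * ((r : ℝ) : ℂ) := by
      linear_combination h4 + d j * Gmat H P j j * hrealC
    exact mul_right_cancel₀ hrC h5
  have hne : (((1 + Wval H P ω j / Sval H P j : ℝ) : ℂ) * Gmat H P j j) ≠ 0 := by
    apply mul_ne_zero
    · simp only [Ne, Complex.ofReal_eq_zero]
      have : 0 < 1 + Wval H P ω j / Sval H P j := by
        have := div_pos (hW j) (hS j); linarith
      exact this.ne'
    · exact hg j
  have : d j = (starRingEnd ℂ) (H 0 j) * c
      * (((1 + Wval H P ω j / Sval H P j : ℝ) : ℂ) * Gmat H P j j)⁻¹ :=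
    (eq_mul_inv_iff_mul_eq₀ hne).mpr hkey
  rw [this]
  simp [vvec]
  ring
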